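/- Let Γ₀ = iI_d and suppose Γ : [0,T] → ℂ^{d×d} solves Γ̇_t = -K_t - Γ_t L_t - L_t^T Γ_t - Γ_t G_t Γ_t with K_t, G_t real symmetric and L_t real, all continuous in t. Then Γ_t is symmetric for all t ∈ [0,T], i.e. Γ_t^T = Γ_t. -/
import Mathlib


open MeasureTheory Complex Real Set Matrix
noncomputable section

set_option maxHeartbeats 2000000

/-- auxiliary matrix identity: the transpose-difference of the Riccati RHS. -/
lemma riccati_aux {d : ℕ} (A P Q Kc : Matrix (Fin d) (Fin d) ℂ)
    (hK : Kcᵀ = Kc) (hQ : Qᵀ = Q) :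
    (-Kc - A * P - Pᵀ * A - A * Q * A)ᵀ - (-Kc - A * P - Pᵀ * A - A * Q * A)
      = -(Pᵀ * (Aᵀ - A)) - (Aᵀ - A) * P - (Aᵀ - A) * Q * Aᵀ - A * Q * (Aᵀ - A) := by
  simp only [transpose_sub, transpose_neg, transpose_mul, transpose_transpose, hK, hQ]
  noncomm_ring

/-- if `Γ` solves the Riccati equation
`Γ̇ = -K - ΓL - LᵀΓ - ΓGΓ` with `Γ₀ = iI`, `K, G` real symmetric and `L` real,
all continuous in `t`, then `Γ_t` is symmetric: `Γ_tᵀ = Γ_t`. -/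
theorem riccati_symmetric (d : ℕ) (T : ℝ) (hT : 0 ≤ T)
    (K L G : ℝ → Matrix (Fin d) (Fin d) ℝ)
    (hKc : Continuous K) (hLc : Continuous L) (hGc : Continuous G)
    (hKsym : ∀ t, (K t)ᵀ = K t) (hGsym : ∀ t, (G t)ᵀ = G t)
    (Γ : ℝ → Matrix (Fin d) (Fin d) ℂ)
    (hΓ0 : Γ 0 = Complex.I • 1)
    (hΓ : ∀ t ∈ Icc (0 : ℝ) T, ∀ i j, HasDerivAt (fun s => Γ s i j)
      ((-(K t).map Complex.ofReal - Γ t * (L t).map Complex.ofReal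
        - ((L t)ᵀ).map Complex.ofReal * Γ t
        - Γ t * (G t).map Complex.ofReal * Γ t) i j) t) :
    ∀ t ∈ Icc (0 : ℝ) T, (Γ t)ᵀ = Γ t := by
  classical
  -- clamp function
  set τ : ℝ → ℝ := fun t => max 0 (min t T) with hτdef
  have hτmem : ∀ t, τ t ∈ Icc (0 : ℝ) T := by
    intro t
    refine ⟨le_max_left _ _, max_le hT (min_le_right _ _)⟩
  have hτeq : ∀ t ∈ Icc (0 : ℝ) T, τ t = t := by
    rintro t ⟨h0, h1⟩
    simp [hτdef, min_eq_left h1, max_eq_right h0]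
  -- complexified (clamped) coefficients
  set P : ℝ → Matrix (Fin d) (Fin d) ℂ := fun t => (L (τ t)).map Complex.ofReal with hP
  set Q : ℝ → Matrix (Fin d) (Fin d) ℂ := fun t => (G (τ t)).map Complex.ofReal with hQ
  set A : ℝ → Matrix (Fin d) (Fin d) ℂ := fun t => Γ (τ t) with hA
  -- the linear vector field on matrices
  set W : ℝ → Matrix (Fin d) (Fin d) ℂ → Matrix (Fin d) (Fin d) ℂ :=
    fun t M => -((P t)ᵀ * M) - M * P t - M * Q t * (A t)ᵀ - A t * Q t * M with hW
  have hWlin : ∀ t M N, W t M - W t N = W t (M - N) := by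
    intro t M N
    simp only [hW, Matrix.mul_sub, Matrix.sub_mul]
    noncomm_ring
  have hW0 : ∀ t, W t 0 = 0 := by
    intro t
    simp [hW]
  -- continuity of entries of Γ on Icc
  have hΓcontOn : ∀ i j, ContinuousOn (fun s => Γ s i j) (Icc (0 : ℝ) T) := by
    intro i j t ht
    exact ((hΓ t ht i j).continuousAt).continuousWithinAt
  -- bound function
  set m : ℝ → ℝ := fun s => ∑ i : Fin d, ∑ j : Fin d,
    (|L s i j| + |G s i j| + ‖Γ s i j‖) with hm
  have hmcont : ContinuousOn m (Icc (0 : ℝ) T) := by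
    apply continuousOn_finset_sum
    intro i _
    apply continuousOn_finset_sum
    intro j _
    exact (((hLc.matrix_elem i j).abs.continuousOn.add
      (hGc.matrix_elem i j).abs.continuousOn).add (hΓcontOn i j).norm)
  obtain ⟨t₀, ht₀, hmax⟩ := isCompact_Icc.exists_isMaxOn ⟨0, by simp [hT]⟩ hmcont
  set B : ℝ := m t₀ with hB
  have hmB : ∀ s ∈ Icc (0 : ℝ) T, m s ≤ B := fun s hs => hmax hs
  have hterm : ∀ s i j, |L s i j| + |G s i j| + ‖Γ s i j‖ ≤ m s := by
    intro s i j
    calc |L s i j| + |G s i j| + ‖Γ s i j‖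
        ≤ ∑ j' : Fin d, (|L s i j'| + |G s i j'| + ‖Γ s i j'‖) := by
          apply Finset.single_le_sum (f := fun j' => |L s i j'| + |G s i j'| + ‖Γ s i j'‖)
            (fun j' _ => by positivity) (Finset.mem_univ j)
      _ ≤ m s := Finset.single_le_sum
            (f := fun i' => ∑ j' : Fin d, (|L s i' j'| + |G s i' j'| + ‖Γ s i' j'‖))
            (fun i' _ => Finset.sum_nonneg fun j' _ => by positivity) (Finset.mem_univ i)
  have hB0 : 0 ≤ B := Finset.sum_nonneg fun i _ => Finset.sum_nonneg fun j _ => by positivity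
  -- entrywise bounds valid for all real t (thanks to clamping)
  have hPB : ∀ t i j, ‖P t i j‖ ≤ B := by
    intro t i j
    have := hterm (τ t) i j
    have h2 := hmB (τ t) (hτmem t)
    simp only [hP, Matrix.map_apply, Complex.norm_real]
    have : |L (τ t) i j| ≤ m (τ t) := by
      have := hterm (τ t) i j; nlinarith [abs_nonneg (G (τ t) i j), norm_nonneg (Γ (τ t) i j)]
    calc ‖(L (τ t) i j : ℝ)‖ = |L (τ t) i j| := by rw [Real.norm_eq_abs]
      _ ≤ m (τ t) := this
      _ ≤ B := h2
  have hQB : ∀ t i j, ‖Q t i j‖ ≤ B := by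
    intro t i j
    have h2 := hmB (τ t) (hτmem t)
    simp only [hQ, Matrix.map_apply, Complex.norm_real]
    have : |G (τ t) i j| ≤ m (τ t) := by
      have := hterm (τ t) i j; nlinarith [abs_nonneg (L (τ t) i j), norm_nonneg (Γ (τ t) i j)]
    calc ‖(G (τ t) i j : ℝ)‖ = |G (τ t) i j| := by rw [Real.norm_eq_abs]
      _ ≤ m (τ t) := this
      _ ≤ B := h2
  have hAB : ∀ t i j, ‖A t i j‖ ≤ B := by
    intro t i j
    have h2 := hmB (τ t) (hτmem t)
    have : ‖Γ (τ t) i j‖ ≤ m (τ t) := by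
      have := hterm (τ t) i j; nlinarith [abs_nonneg (L (τ t) i j), abs_nonneg (G (τ t) i j)]
    exact this.trans h2
  -- bound for W
  set C : ℝ := 2 * d * B + 2 * d * d * B * B with hC
  have hC0 : 0 ≤ C := by positivity
  have hWbound : ∀ t (M : Matrix (Fin d) (Fin d) ℂ) (r : ℝ), 0 ≤ r →
      (∀ k l, ‖M k l‖ ≤ r) → ∀ i j, ‖W t M i j‖ ≤ C * r := by
    intro t M r hr hM i j
    have h1 : ‖((P t)ᵀ * M) i j‖ ≤ d * (B * r) := by
      rw [Matrix.mul_apply]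
      calc ‖∑ k, (P t)ᵀ i k * M k j‖ ≤ ∑ k, ‖(P t)ᵀ i k * M k j‖ := norm_sum_le _ _
        _ ≤ ∑ _k : Fin d, B * r := Finset.sum_le_sum fun k _ => by
            rw [norm_mul]
            exact mul_le_mul (hPB t k i) (hM k j) (norm_nonneg _) hB0
        _ = d * (B * r) := by
            rw [Finset.sum_const, Finset.card_univ, Fintype.card_fin, nsmul_eq_mul]
    have h2 : ‖(M * P t) i j‖ ≤ d * (B * r) := by
      rw [Matrix.mul_apply]
      calc ‖∑ k, M i k * P t k j‖ ≤ ∑ k, ‖M i k * P t k j‖ := norm_sum_le _ _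
        _ ≤ ∑ _k : Fin d, B * r := Finset.sum_le_sum fun k _ => by
            rw [norm_mul, mul_comm (B : ℝ) r]
            exact mul_le_mul (hM i k) (hPB t k j) (norm_nonneg _) hr
        _ = d * (B * r) := by
            rw [Finset.sum_const, Finset.card_univ, Fintype.card_fin, nsmul_eq_mul]
    have hMQ : ∀ i l, ‖(M * Q t) i l‖ ≤ d * (r * B) := by
      intro i l
      rw [Matrix.mul_apply]
      calc ‖∑ k, M i k * Q t k l‖ ≤ ∑ k, ‖M i k * Q t k l‖ := norm_sum_le _ _
        _ ≤ ∑ _k : Fin d, r * B := Finset.sum_le_sum fun k _ => by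
            rw [norm_mul]
            exact mul_le_mul (hM i k) (hQB t k l) (norm_nonneg _) hr
        _ = d * (r * B) := by
            rw [Finset.sum_const, Finset.card_univ, Fintype.card_fin, nsmul_eq_mul]
    have hAQ : ∀ i l, ‖(A t * Q t) i l‖ ≤ d * (B * B) := by
      intro i l
      rw [Matrix.mul_apply]
      calc ‖∑ k, A t i k * Q t k l‖ ≤ ∑ k, ‖A t i k * Q t k l‖ := norm_sum_le _ _
        _ ≤ ∑ _k : Fin d, B * B := Finset.sum_le_sum fun k _ => by
            rw [norm_mul]
            exact mul_le_mul (hAB t i k) (hQB t k l) (norm_nonneg _) hB0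
        _ = d * (B * B) := by
            rw [Finset.sum_const, Finset.card_univ, Fintype.card_fin, nsmul_eq_mul]
    have h3 : ‖(M * Q t * (A t)ᵀ) i j‖ ≤ d * (d * (r * B) * B) := by
      rw [Matrix.mul_apply]
      calc ‖∑ l, (M * Q t) i l * (A t)ᵀ l j‖ ≤ ∑ l, ‖(M * Q t) i l * (A t)ᵀ l j‖ :=
          norm_sum_le _ _
        _ ≤ ∑ _l : Fin d, (d * (r * B)) * B := Finset.sum_le_sum fun l _ => by
            rw [norm_mul]
            exact mul_le_mul (hMQ i l) (hAB t j l) (norm_nonneg _) (by positivity)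
        _ = d * (d * (r * B) * B) := by
            rw [Finset.sum_const, Finset.card_univ, Fintype.card_fin, nsmul_eq_mul]
    have h4 : ‖(A t * Q t * M) i j‖ ≤ d * (d * (B * B) * r) := by
      rw [Matrix.mul_apply]
      calc ‖∑ l, (A t * Q t) i l * M l j‖ ≤ ∑ l, ‖(A t * Q t) i l * M l j‖ := norm_sum_le _ _
        _ ≤ ∑ _l : Fin d, (d * (B * B)) * r := Finset.sum_le_sum fun l _ => by
            rw [norm_mul]
            exact mul_le_mul (hAQ i l) (hM l j) (norm_nonneg _) (by positivity)
        _ = d * (d * (B * B) * r) := by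
            rw [Finset.sum_const, Finset.card_univ, Fintype.card_fin, nsmul_eq_mul]
    have expand : W t M i j
        = -(((P t)ᵀ * M) i j) - (M * P t) i j - (M * Q t * (A t)ᵀ) i j - (A t * Q t * M) i j := by
      simp [hW, Matrix.sub_apply, Matrix.neg_apply]
    rw [expand]
    calc ‖-(((P t)ᵀ * M) i j) - (M * P t) i j - (M * Q t * (A t)ᵀ) i j - (A t * Q t * M) i j‖
        ≤ ‖-(((P t)ᵀ * M) i j) - (M * P t) i j - (M * Q t * (A t)ᵀ) i j‖
            + ‖(A t * Q t * M) i j‖ := norm_sub_le _ _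
      _ ≤ (‖-(((P t)ᵀ * M) i j) - (M * P t) i j‖ + ‖(M * Q t * (A t)ᵀ) i j‖)
            + ‖(A t * Q t * M) i j‖ := by
          gcongr
          exact norm_sub_le _ _
      _ ≤ ((‖((P t)ᵀ * M) i j‖ + ‖(M * P t) i j‖) + ‖(M * Q t * (A t)ᵀ) i j‖)
            + ‖(A t * Q t * M) i j‖ := by
          gcongr
          exact (norm_sub_le _ _).trans (by rw [norm_neg])
      _ ≤ ((d * (B * r) + d * (B * r)) + d * (d * (r * B) * B)) + d * (d * (B * B) * r) := by
          gcongr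
      _ = C * r := by rw [hC]; ring
  -- the vector field in the Pi type
  set v : ℝ → (Fin d → Fin d → ℂ) → (Fin d → Fin d → ℂ) :=
    fun t x => Matrix.of.symm (W t (Matrix.of x)) with hv
  -- Lipschitz
  have hlip : ∀ t, LipschitzWith C.toNNReal (v t) := by
    intro t
    apply LipschitzWith.of_dist_le_mul
    intro x y
    have hcoe : (C.toNNReal : ℝ) = C := Real.coe_toNNReal C hC0
    rw [hcoe]
    rw [dist_pi_le_iff (by positivity)]
    intro i
    rw [dist_pi_le_iff (by positivity)]
    intro j
    have hdiff : v t x i j - v t y i j = W t (Matrix.of x - Matrix.of y) i j := by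
      have : v t x i j - v t y i j = (W t (Matrix.of x) - W t (Matrix.of y)) i j := by
        simp [hv, Matrix.sub_apply]
      rw [this, hWlin]
    have hentry : ∀ k l, ‖(Matrix.of x - Matrix.of y) k l‖ ≤ dist x y := by
      intro k l
      have h1 : dist (x k l) (y k l) ≤ dist (x k) (y k) := dist_le_pi_dist _ _ l
      have h2 : dist (x k) (y k) ≤ dist x y := dist_le_pi_dist x y k
      simpa [Matrix.sub_apply, dist_eq_norm] using h1.trans h2
    have := hWbound t (Matrix.of x - Matrix.of y) (dist x y) dist_nonneg hentry i j
    rw [dist_eq_norm, hdiff]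
    exact this
  -- the difference function
  set f : ℝ → (Fin d → Fin d → ℂ) := fun t i j => Γ t j i - Γ t i j with hf
  -- derivative of f
  have hfderiv : ∀ t ∈ Icc (0 : ℝ) T, HasDerivAt f (v t (f t)) t := by
    intro t ht
    rw [hasDerivAt_pi]
    intro i
    rw [hasDerivAt_pi]
    intro j
    have hR := hΓ t ht
    set R : Matrix (Fin d) (Fin d) ℂ :=
      -(K t).map Complex.ofReal - Γ t * (L t).map Complex.ofReal
        - ((L t)ᵀ).map Complex.ofReal * Γ t - Γ t * (G t).map Complex.ofReal * Γ t with hRdef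
    have hd : HasDerivAt (fun s => Γ s j i - Γ s i j) (R j i - R i j) t :=
      (hR j i).sub (hR i j)
    have hfin : R j i - R i j = v t (f t) i j := by
      have hKt : ((K t).map Complex.ofReal)ᵀ = (K t).map Complex.ofReal := by
        rw [← Matrix.transpose_map, hKsym]
      have hGt : ((G t).map Complex.ofReal)ᵀ = (G t).map Complex.ofReal := by
        rw [← Matrix.transpose_map, hGsym]
      have hPt : P t = (L t).map Complex.ofReal := by
        simp only [hP]; rw [hτeq t ht]
      have hQt : Q t = (G t).map Complex.ofReal := by
        simp only [hQ]; rw [hτeq t ht]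
      have hAt : A t = Γ t := by
        simp only [hA]; rw [hτeq t ht]
      have hLt : ((L t)ᵀ).map Complex.ofReal = ((L t).map Complex.ofReal)ᵀ :=
        Matrix.transpose_map
      have hofft : Matrix.of (f t) = (Γ t)ᵀ - Γ t := by
        ext k l
        simp [hf, Matrix.sub_apply, Matrix.transpose_apply]
      have key := riccati_aux (Γ t) ((L t).map Complex.ofReal) ((G t).map Complex.ofReal)
        ((K t).map Complex.ofReal) hKt hGt
      have hR2 : R = -(K t).map Complex.ofReal - Γ t * (L t).map Complex.ofReal
          - ((L t).map Complex.ofReal)ᵀ * Γ t - Γ t * (G t).map Complex.ofReal * Γ t := by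
        rw [hRdef, hLt]
      have hRT : Rᵀ - R = W t (Matrix.of (f t)) := by
        rw [hR2, key]
        simp only [hW, hofft, hPt, hQt, hAt]
      have : R j i - R i j = (Rᵀ - R) i j := by
        simp [Matrix.sub_apply, Matrix.transpose_apply]
      rw [this, hRT]
      simp [hv]
    rw [← hfin]
    exact hd
  -- continuity of f on Icc
  have hfcont : ContinuousOn f (Icc (0 : ℝ) T) := by
    intro t ht
    exact ((hfderiv t ht).continuousAt).continuousWithinAt
  -- f 0 = 0
  have hf0 : f 0 = 0 := by
    funext i j
    simp only [hf, hΓ0, Matrix.smul_apply, Matrix.one_apply]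
    by_cases h : i = j
    · subst h; simp
    · simp [h, Ne.symm h]
  -- zero function is a solution
  have hzero : ∀ t, v t 0 = 0 := by
    intro t
    show Matrix.of.symm (W t (Matrix.of 0)) = 0
    rw [show Matrix.of (0 : Fin d → Fin d → ℂ) = (0 : Matrix (Fin d) (Fin d) ℂ) from rfl, hW0]
    rfl
  -- uniqueness
  have huniq : EqOn f (fun _ => (0 : Fin d → Fin d → ℂ)) (Icc 0 T) := by
    apply ODE_solution_unique (v := v) (K := C.toNNReal) hlip hfcont
    · intro t ht
      exact ((hfderiv t (Ico_subset_Icc_self ht)).hasDerivWithinAt)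
    · exact continuousOn_const
    · intro t ht
      rw [hzero]
      exact (hasDerivAt_const t (0 : Fin d → Fin d → ℂ)).hasDerivWithinAt
    · simp [hf0]
  -- conclude
  intro t ht
  have := huniq ht
  ext i j
  have h0 : f t i j = 0 := by rw [this]; rfl
  have : Γ t j i - Γ t i j = 0 := h0
  rw [Matrix.transpose_apply]
  exact sub_eq_zero.mp this
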